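/- arXiv:1104.5644 — 2 statements merged into one kernel-verified Lean document; each statement's English description precedes it below -/
import Mathlib

section
/- Let Y be a symmetric positive definite g×g real matrix, defining the norm ‖x‖_Y = √(xᵀYx) on ℝ^g. Let λ₁(Y⁻¹) = min_{m ∈ ℤ^g \ {0}} ‖m‖_{Y⁻¹} be the first minimum of Y⁻¹ and μ(Y) = max_{x ∈ ℝ^g} min_{m ∈ ℤ^g} ‖x - m‖_Y be the inhomogeneous minimum (covering radius) of Y. Then 2·μ(Y)·λ₁(Y⁻¹) ≥ 1. -/
/-!
For a nonzero `m ∈ ℤ^g` choose `x` with `m ⬝ x = 1/2`. For every `n ∈ ℤ^g` the number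
`m ⬝ (x - n)` lies in `1/2 + ℤ`, so by Cauchy–Schwarz for the dual pair of norms
`1/2 ≤ |m ⬝ (x - n)| ≤ ‖m‖_{Y⁻¹} ‖x - n‖_Y`. Minimising over `n` gives
`1/2 ≤ ‖m‖_{Y⁻¹} μ(Y)`, and minimising over `m` gives the claim.
-/

open MeasureTheory Real Matrix

noncomputable def coeZ {g : ℕ} (m : Fin g → ℤ) : Fin g → ℝ := fun i => (m i : ℝ)

noncomputable def normY {g : ℕ} (Y : Matrix (Fin g) (Fin g) ℝ) (x : Fin g → ℝ) : ℝ :=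
  Real.sqrt (x ⬝ᵥ Y.mulVec x)

noncomputable def psi {g : ℕ} (Y : Matrix (Fin g) (Fin g) ℝ) (x : Fin g → ℝ) : ℝ :=
  ⨅ m : Fin g → ℤ, normY Y (x - coeZ m)

noncomputable def mu {g : ℕ} (Y : Matrix (Fin g) (Fin g) ℝ) : ℝ :=
  ⨆ x : Fin g → ℝ, psi Y x

noncomputable def lam1 {g : ℕ} (Y : Matrix (Fin g) (Fin g) ℝ) : ℝ :=
  ⨅ m : {m : Fin g → ℤ // m ≠ 0}, normY Y (coeZ (m : Fin g → ℤ))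

lemma Matrix.PosSemidef.dotProduct_mulVec_mul_self_le {n : Type*} [Fintype n]
    {M : Matrix n n ℝ} (hM : M.PosSemidef) (u v : n → ℝ) :
    (u ⬝ᵥ M *ᵥ v) * (u ⬝ᵥ M *ᵥ v) ≤ (u ⬝ᵥ M *ᵥ u) * (v ⬝ᵥ M *ᵥ v) := by
  let := M.toSeminormedAddCommGroup hM
  let := M.toInnerProductSpace hM
  have hinner : ∀ x y : n → ℝ, inner ℝ x y = x ⬝ᵥ M *ᵥ y := fun x y => dotProduct_comm _ _
  simpa only [hinner] using real_inner_mul_inner_self_le u v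

lemma exists_dotProduct_eq {n K : Type*} [Fintype n] [DecidableEq n] [Field K] {a : n → K}
    (ha : a ≠ 0) (c : K) : ∃ x, a ⬝ᵥ x = c := by
  obtain ⟨i, hi⟩ := Function.ne_iff.mp ha
  exact ⟨Pi.single i (c / a i), by rw [dotProduct_single, mul_div_cancel₀ _ hi]⟩

lemma half_le_abs_half_sub_intCast (k : ℤ) : 1 / 2 ≤ |1 / 2 - (k : ℝ)| := by
  rcases le_or_gt k 0 with hk | hk
  · have : (k : ℝ) ≤ 0 := Int.cast_nonpos.mpr hk
    exact le_abs.mpr (Or.inl (by linarith))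
  · have : (1 : ℝ) ≤ k := by exact_mod_cast hk
    exact le_abs.mpr (Or.inr (by linarith))

section

variable {g : ℕ}

lemma coeZ_eq_zero {m : Fin g → ℤ} : coeZ m = 0 ↔ m = 0 := by
  simp [coeZ, funext_iff]

lemma coeZ_dotProduct_coeZ (m n : Fin g → ℤ) : coeZ m ⬝ᵥ coeZ n = ((m ⬝ᵥ n : ℤ) : ℝ) := by
  simp [coeZ, dotProduct]

variable (Y : Matrix (Fin g) (Fin g) ℝ)

lemma normY_nonneg (x : Fin g → ℝ) : 0 ≤ normY Y x :=
  Real.sqrt_nonneg _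

lemma continuous_normY : Continuous (normY Y) := by
  unfold normY; fun_prop

lemma psi_le (x : Fin g → ℝ) (m : Fin g → ℤ) : psi Y x ≤ normY Y (x - coeZ m) :=
  ciInf_le ⟨0, by rintro _ ⟨n, rfl⟩; exact normY_nonneg _ _⟩ m

-- `x - ⌊x⌋` lies in the compact cube `[0, 1]^g`, on which `normY Y` is bounded.
lemma bddAbove_range_psi : BddAbove (Set.range (psi Y)) := by
  obtain ⟨C, hC⟩ := (isCompact_univ_pi fun _ : Fin g => isCompact_Icc (a := (0 : ℝ)) (b := 1))
    |>.bddAbove_image (continuous_normY Y).continuousOn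
  refine ⟨C, ?_⟩
  rintro _ ⟨x, rfl⟩
  refine (psi_le Y x fun i => ⌊x i⌋).trans (hC ⟨x - coeZ fun i => ⌊x i⌋, ?_, rfl⟩)
  exact fun i _ => ⟨Int.fract_nonneg (x i), (Int.fract_lt_one (x i)).le⟩

lemma mu_nonneg : 0 ≤ mu Y :=
  Real.iSup_nonneg fun _ => Real.iInf_nonneg fun _ => normY_nonneg _ _

variable {Y}

lemma abs_dotProduct_mulVec_le_normY (hY : Y.PosSemidef) (u v : Fin g → ℝ) :
    |u ⬝ᵥ Y *ᵥ v| ≤ normY Y u * normY Y v := by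
  rw [normY, normY, ← Real.sqrt_mul (by simpa using hY.dotProduct_mulVec_nonneg u)]
  exact Real.abs_le_sqrt (by simpa [sq] using hY.dotProduct_mulVec_mul_self_le u v)

-- Cauchy–Schwarz for `Y`, applied to `Y⁻¹ a` and `z`.
lemma abs_dotProduct_le_normY_inv_mul_normY (hY : Y.PosDef) (a z : Fin g → ℝ) :
    |a ⬝ᵥ z| ≤ normY Y⁻¹ a * normY Y z := by
  have hYY : Y * Y⁻¹ = 1 := Y.mul_nonsing_inv (isUnit_iff_ne_zero.mpr hY.det_pos.ne')
  have hYT : Yᵀ = Y := by simpa [conjTranspose_eq_transpose_of_trivial] using hY.isHermitian.eq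
  have hpair : (Y⁻¹ *ᵥ a) ⬝ᵥ Y *ᵥ z = a ⬝ᵥ z := by
    rw [dotProduct_mulVec, ← mulVec_transpose, hYT, mulVec_mulVec, hYY, one_mulVec]
  have hnorm : normY Y (Y⁻¹ *ᵥ a) = normY Y⁻¹ a := by
    rw [normY, normY, mulVec_mulVec, hYY, one_mulVec, dotProduct_comm]
  simpa only [hpair, hnorm] using abs_dotProduct_mulVec_le_normY hY.posSemidef (Y⁻¹ *ᵥ a) z

lemma half_le_normY_inv_mul_psi (hY : Y.PosDef) {m : Fin g → ℤ} {x : Fin g → ℝ}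
    (hx : coeZ m ⬝ᵥ x = 1 / 2) : 1 / 2 ≤ normY Y⁻¹ (coeZ m) * psi Y x := by
  rw [psi, Real.mul_iInf_of_nonneg (normY_nonneg _ _)]
  refine le_ciInf fun n => ?_
  calc (1 : ℝ) / 2 ≤ |coeZ m ⬝ᵥ (x - coeZ n)| := by
        rw [dotProduct_sub, hx, coeZ_dotProduct_coeZ]
        exact half_le_abs_half_sub_intCast _
    _ ≤ normY Y⁻¹ (coeZ m) * normY Y (x - coeZ n) :=
        abs_dotProduct_le_normY_inv_mul_normY hY _ _

lemma one_le_two_mul_mu_mul_normY_inv (hY : Y.PosDef) {m : Fin g → ℤ} (hm : m ≠ 0) :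
    1 ≤ 2 * mu Y * normY Y⁻¹ (coeZ m) := by
  obtain ⟨x, hx⟩ := exists_dotProduct_eq (coeZ_eq_zero.not.mpr hm) (1 / 2 : ℝ)
  have hhalf := half_le_normY_inv_mul_psi hY hx
  have hpsi : psi Y x ≤ mu Y := le_ciSup (bddAbove_range_psi Y) x
  nlinarith [normY_nonneg Y⁻¹ (coeZ m)]

end

theorem matrix_lemma_covering_radius_general {g : ℕ} (hg : 1 ≤ g)
    (Y : Matrix (Fin g) (Fin g) ℝ) (hY : Y.PosDef) :
    1 ≤ 2 * mu Y * lam1 Y⁻¹ := by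
  have hm₀ : (Pi.single (⟨0, hg⟩ : Fin g) 1 : Fin g → ℤ) ≠ 0 := by simp
  have hmu : 0 < mu Y := by
    refine (mu_nonneg Y).lt_of_ne fun h => ?_
    have h₁ := one_le_two_mul_mu_mul_normY_inv hY hm₀
    norm_num [← h] at h₁
  have : Nonempty {m : Fin g → ℤ // m ≠ 0} := ⟨⟨_, hm₀⟩⟩
  rw [← div_le_iff₀' (by positivity)]
  exact le_ciInf fun m => (div_le_iff₀' (by positivity)).mpr
    (one_le_two_mul_mu_mul_normY_inv hY m.2)

theorem matrix_lemma_covering_radius {g : ℕ} (hg : 1 ≤ g)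
    (Y : Matrix (Fin g) (Fin g) ℝ) (hsymm : Y.IsSymm) (hY : Y.PosDef) :
    1 ≤ 2 * mu Y * lam1 Y⁻¹ :=
  matrix_lemma_covering_radius_general hg Y hY
end

section
/- Let Y be a symmetric positive definite g×g real matrix with norm ‖·‖_Y and ψ(x) = min_{m ∈ ℤ^g} ‖x - m‖_Y. Define f_Y(t,x) = √(det Y) · Σ_{m ∈ ℤ^g} exp(-π t ‖x - m‖_Y²). Then for each fixed x ∈ ℝ^g, the function t ↦ f_Y(t,x) · exp(π t ψ(x)²) is nonincreasing on (0, ∞). -/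
/-! Multiplying by `exp (π t ψ(x)²)` turns the `m`-th term of `f_Y(t, x)` into
`exp (π t (ψ(x)² - ‖x - m‖_Y²))`, and the coefficient of `t` is `≤ 0` because `ψ(x)` is the
distance from `x` to the lattice. So every term is nonincreasing in `t`. Summability for `t > 0`
comes from bounding `‖v‖_Y²` below by a multiple of `∑ vᵢ²`, which dominates the lattice Gaussian
by a product of one-dimensional theta series. -/

open MeasureTheory Real Matrix

noncomputable def fY {g : ℕ} (Y : Matrix (Fin g) (Fin g) ℝ) (t : ℝ) (x : Fin g → ℝ) : ℝ :=
  Real.sqrt Y.det * ∑' m : Fin g → ℤ, Real.exp (-π * t * normY Y (x - coeZ m) ^ 2)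

theorem exists_pos_mul_norm_sq_le {E : Type*} [NormedAddCommGroup E] [NormedSpace ℝ E]
    [ProperSpace E] {Q : E → ℝ} (hQ : Continuous Q) (hpos : ∀ v ≠ 0, 0 < Q v)
    (hsmul : ∀ (r : ℝ) v, Q (r • v) = r ^ 2 * Q v) :
    ∃ c > 0, ∀ v, c * ‖v‖ ^ 2 ≤ Q v := by
  cases subsingleton_or_nontrivial E
  · refine ⟨1, one_pos, fun v => ?_⟩
    simpa [Subsingleton.elim v 0] using (hsmul 0 0).ge
  obtain ⟨u, hu, hmin⟩ := (isCompact_sphere (0 : E) 1).exists_isMinOn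
    (NormedSpace.sphere_nonempty.mpr zero_le_one) hQ.continuousOn
  have hu0 : u ≠ 0 := ne_zero_of_mem_unit_sphere ⟨u, hu⟩
  refine ⟨Q u, hpos u hu0, fun v => ?_⟩
  rcases eq_or_ne v 0 with rfl | hv
  · simpa using (hsmul 0 0).ge
  have hunit : ‖v‖⁻¹ • v ∈ Metric.sphere (0 : E) 1 := by
    simp [norm_smul, hv]
  calc Q u * ‖v‖ ^ 2 ≤ Q (‖v‖⁻¹ • v) * ‖v‖ ^ 2 := by gcongr; exact hmin hunit
    _ = Q v := by rw [hsmul]; field_simp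

theorem Matrix.PosDef.exists_pos_mul_sum_sq_le {n : Type*} [Fintype n] {Y : Matrix n n ℝ}
    (hY : Y.PosDef) : ∃ c > 0, ∀ v : n → ℝ, c * ∑ i, v i ^ 2 ≤ v ⬝ᵥ Y *ᵥ v := by
  obtain ⟨c, hc, hle⟩ := exists_pos_mul_norm_sq_le (E := EuclideanSpace ℝ n)
    (Q := fun v => v.ofLp ⬝ᵥ Y *ᵥ v.ofLp) (by fun_prop)
    (fun v hv => hY.dotProduct_mulVec_pos (by simpa using hv))
    (fun r v => by
      simp only [WithLp.ofLp_smul, mulVec_smul, smul_dotProduct, dotProduct_smul, smul_eq_mul]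
      ring)
  refine ⟨c, hc, fun v => ?_⟩
  simpa [EuclideanSpace.real_norm_sq_eq] using hle (WithLp.toLp 2 v)

theorem summable_fin_prod_of_nonneg {β : Type*} {n : ℕ} {f : Fin n → β → ℝ}
    (hf : ∀ i b, 0 ≤ f i b) (hs : ∀ i, Summable (f i)) :
    Summable fun m : Fin n → β => ∏ i, f i (m i) := by
  induction n with
  | zero => exact .of_finite
  | succ n ih =>
    have htail : Summable fun m : Fin n → β => ∏ i, f i.succ (m i) :=
      ih (fun i => hf i.succ) (fun i => hs i.succ)
    have hprod : Summable fun p : β × (Fin n → β) => f 0 p.1 * ∏ i, f i.succ (p.2 i) := by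
      apply (hs 0).mul_of_nonneg htail (fun b => hf 0 b)
      exact fun m => Finset.prod_nonneg fun i _ => hf _ _
    refine (((Fin.consEquiv fun _ => β).symm.summable_iff
      (f := fun p : β × (Fin n → β) => f 0 p.1 * ∏ i, f i.succ (p.2 i))).mpr hprod).congr
      fun m => ?_
    simp [Fin.consEquiv, Fin.prod_univ_succ, Fin.tail]

theorem normY_sq {g : ℕ} {Y : Matrix (Fin g) (Fin g) ℝ} (hY : Y.PosSemidef) (v : Fin g → ℝ) :
    normY Y v ^ 2 = v ⬝ᵥ Y *ᵥ v :=
  sq_sqrt (hY.dotProduct_mulVec_nonneg v)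

theorem psi_nonneg {g : ℕ} (Y : Matrix (Fin g) (Fin g) ℝ) (x : Fin g → ℝ) : 0 ≤ psi Y x :=
  Real.iInf_nonneg fun _ => sqrt_nonneg _

theorem psi_le_normY {g : ℕ} (Y : Matrix (Fin g) (Fin g) ℝ) (x : Fin g → ℝ) (m : Fin g → ℤ) :
    psi Y x ≤ normY Y (x - coeZ m) :=
  ciInf_le ⟨0, by rintro _ ⟨m, rfl⟩; exact sqrt_nonneg _⟩ m

theorem summable_exp_neg_mul_normY_sq {g : ℕ} {Y : Matrix (Fin g) (Fin g) ℝ} (hY : Y.PosDef)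
    (x : Fin g → ℝ) {t : ℝ} (ht : 0 < t) :
    Summable fun m : Fin g → ℤ => exp (-π * t * normY Y (x - coeZ m) ^ 2) := by
  obtain ⟨c, hc, hle⟩ := hY.exists_pos_mul_sum_sq_le
  have hgauss (i : Fin g) : Summable fun n : ℤ => exp (-π * (t * c) * (x i - n) ^ 2) :=
    (HurwitzKernelBounds.summable_f_int 0 (-x i) (mul_pos ht hc)).congr fun n => by
      simp only [HurwitzKernelBounds.f_int, pow_zero, one_mul]
      ring_nf
  refine .of_nonneg_of_le (fun _ => (exp_pos _).le) (fun m => ?_)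
    (summable_fin_prod_of_nonneg (fun _ _ => (exp_pos _).le) hgauss)
  rw [← exp_sum, exp_le_exp, normY_sq hY.posSemidef, ← Finset.mul_sum]
  have := hle (x - coeZ m)
  simp only [Pi.sub_apply, coeZ] at this
  nlinarith [mul_pos pi_pos ht]

theorem antitoneOn_tsum_exp_mul {α : Type*} {d : α → ℝ} (hd : ∀ m, d m ≤ 0)
    (hs : ∀ t > 0, Summable fun m => exp (t * d m)) :
    AntitoneOn (fun t => ∑' m, exp (t * d m)) (Set.Ioi 0) := fun a ha b hb hab =>
  (hs b hb).tsum_le_tsum (fun m => exp_le_exp.mpr (mul_le_mul_of_nonpos_right hab (hd m)))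
    (hs a ha)

theorem fY_mul_exp_eq_tsum {g : ℕ} (Y : Matrix (Fin g) (Fin g) ℝ) (t r : ℝ) (x : Fin g → ℝ) :
    fY Y t x * exp (π * t * r) =
      sqrt Y.det * ∑' m : Fin g → ℤ, exp (t * (π * (r - normY Y (x - coeZ m) ^ 2))) := by
  rw [fY, mul_assoc, ← tsum_mul_right]
  congr 1
  refine tsum_congr fun m => ?_
  rw [← exp_add]
  ring_nf

theorem fY_antitone_general {g : ℕ} (Y : Matrix (Fin g) (Fin g) ℝ)
    (hY : Y.PosDef) (x : Fin g → ℝ) :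
    AntitoneOn (fun t => fY Y t x * Real.exp (π * t * psi Y x ^ 2)) (Set.Ioi 0) := by
  have hd (m : Fin g → ℤ) : π * (psi Y x ^ 2 - normY Y (x - coeZ m) ^ 2) ≤ 0 :=
    mul_nonpos_of_nonneg_of_nonpos pi_pos.le <| sub_nonpos.mpr <|
      pow_le_pow_left₀ (psi_nonneg Y x) (psi_le_normY Y x m) 2
  have hs (t : ℝ) (ht : 0 < t) :
      Summable fun m : Fin g → ℤ => exp (t * (π * (psi Y x ^ 2 - normY Y (x - coeZ m) ^ 2))) :=
    ((summable_exp_neg_mul_normY_sq hY x ht).mul_left (exp (π * t * psi Y x ^ 2))).congr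
      fun m => by rw [← exp_add]; ring_nf
  simp only [fY_mul_exp_eq_tsum]
  exact fun a ha b hb hab =>
    mul_le_mul_of_nonneg_left (antitoneOn_tsum_exp_mul hd hs ha hb hab) (sqrt_nonneg _)

theorem fY_antitone {g : ℕ} (hg : 1 ≤ g) (Y : Matrix (Fin g) (Fin g) ℝ)
    (hsymm : Y.IsSymm) (hY : Y.PosDef) (x : Fin g → ℝ) :
    AntitoneOn (fun t => fY Y t x * Real.exp (π * t * psi Y x ^ 2)) (Set.Ioi 0) :=
  fY_antitone_general Y hY x
end
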